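/- Let Q be a real symmetric n×n matrix whose eigenvalues λ₁ ≥ λ₂ ≥ … ≥ λ_n satisfy λ_i ∈ [0, 1/2] for all i ≥ 2 and λ₁ < 1. Then for every integer ℓ ≥ 1, ‖Q(I-Q)^{-ℓ}‖_F² ≤ (1-λ₁)^{-2ℓ} + 4^ℓ · Tr(Q²). -/

import Mathlib

/-!
By the functional calculus, `Q (1 - Q)⁻¹ ^ ℓ = g(Q)` for `g x = x (1 - x)^{-ℓ}`, a symmetric
matrix, so its squared Frobenius norm is `Tr g(Q)² = ∑ᵢ g(λᵢ)²`, while `Tr Q² = ∑ᵢ λᵢ²`. The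
inequality then holds eigenvalue by eigenvalue: for `λ ≤ 1/2` we have `(1 - λ)^{-2ℓ} ≤ 4^ℓ`, so
`g(λ)² ≤ 4^ℓ λ²`, and for `1/2 < λ < 1` we have `λ² ≤ 1`, so `g(λ)² ≤ (1 - λ)^{-2ℓ}`.
-/

open Polynomial

lemma sq_mul_inv_one_sub_pow (x : ℝ) (ℓ : ℕ) :
    (x * (1 - x)⁻¹ ^ ℓ) ^ 2 = x ^ 2 * ((1 - x) ^ (2 * ℓ))⁻¹ := by
  rw [mul_pow, ← pow_mul, inv_pow, mul_comm ℓ 2]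

lemma inv_one_sub_pow_two_mul_le_four_pow {x : ℝ} (hx : x ≤ 1 / 2) (ℓ : ℕ) :
    ((1 - x) ^ (2 * ℓ))⁻¹ ≤ 4 ^ ℓ := by
  have h : ((4 : ℝ) ^ ℓ)⁻¹ = (1 / 2) ^ (2 * ℓ) := by
    rw [pow_mul, ← inv_pow]; norm_num
  rw [← inv_inv ((4 : ℝ) ^ ℓ), h]
  exact inv_anti₀ (by positivity) (pow_le_pow_left₀ (by norm_num) (by linarith) _)

lemma sq_mul_inv_one_sub_pow_le_of_le_half {x : ℝ} (hx : x ≤ 1 / 2) (ℓ : ℕ) :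
    (x * (1 - x)⁻¹ ^ ℓ) ^ 2 ≤ 4 ^ ℓ * x ^ 2 := by
  rw [sq_mul_inv_one_sub_pow, mul_comm]
  exact mul_le_mul_of_nonneg_right (inv_one_sub_pow_two_mul_le_four_pow hx ℓ) (sq_nonneg x)

lemma sq_mul_inv_one_sub_pow_le {x : ℝ} (hx : x < 1) (ℓ : ℕ) :
    (x * (1 - x)⁻¹ ^ ℓ) ^ 2 ≤ ((1 - x) ^ (2 * ℓ))⁻¹ + 4 ^ ℓ * x ^ 2 := by
  have hc : 0 ≤ ((1 - x) ^ (2 * ℓ))⁻¹ := by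
    have : 0 < 1 - x := by linarith
    positivity
  rcases le_or_gt x (1 / 2) with hx' | hx'
  · linarith [sq_mul_inv_one_sub_pow_le_of_le_half hx' ℓ]
  · have hx2 : x ^ 2 ≤ 1 := by nlinarith
    rw [sq_mul_inv_one_sub_pow]
    nlinarith [pow_nonneg (show (0 : ℝ) ≤ 4 by norm_num) ℓ]

lemma cfc_mul_inv_one_sub_pow {A : Type*} [TopologicalSpace A] [Ring A] [StarRing A]
    [Algebra ℝ A] [ContinuousFunctionalCalculus ℝ A IsSelfAdjoint] {a : A}
    (ha : IsSelfAdjoint a) (h1 : ∀ x ∈ spectrum ℝ a, x ≠ 1) (ℓ : ℕ) :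
    cfc (fun x : ℝ => x * (1 - x)⁻¹ ^ ℓ) a = a * Ring.inverse (1 - a) ^ ℓ := by
  have h0 : ∀ x ∈ spectrum ℝ a, 1 - x ≠ 0 := fun x hx => sub_ne_zero.mpr (h1 x hx).symm
  rw [cfc_mul .., cfc_pow .., cfc_inv _ _ h0, cfc_sub .., cfc_const_one ℝ a, cfc_id' ℝ a]

namespace Matrix

lemma IsSymm.sum_sq_entries_eq_trace_mul_self {n R : Type*} [Fintype n] [CommSemiring R]
    {M : Matrix n n R} (hM : M.IsSymm) : ∑ i, ∑ j, M i j ^ 2 = (M * M).trace := by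
  simp only [trace, diag_apply, mul_apply, sq]
  exact Finset.sum_congr rfl fun i _ => Finset.sum_congr rfl fun j _ => by rw [hM.apply i j]

namespace IsHermitian

variable {n 𝕜 : Type*} [RCLike 𝕜] [Fintype n] [DecidableEq n] {A : Matrix n n 𝕜}
  (hA : A.IsHermitian) {lam : n → ℝ} (hchar : A.charpoly = ∏ i, (X - C (lam i : 𝕜)))
include hA

lemma trace_cfc_eq (f : ℝ → ℝ) : (cfc f A).trace = ∑ i, (f (hA.eigenvalues i) : 𝕜) := by
  rw [hA.cfc_eq, IsHermitian.cfc, Unitary.conjStarAlgAut_apply, trace_mul_cycle,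
    Unitary.coe_star_mul_self, one_mul]
  simp

include hchar

lemma map_eigenvalues_eq_of_charpoly_eq :
    Finset.univ.val.map hA.eigenvalues = Finset.univ.val.map lam := by
  have h := hA.roots_charpoly_eq_eigenvalues
  rw [hchar, roots_prod _ _ (by simp [Finset.prod_ne_zero_iff, X_sub_C_ne_zero])] at h
  simp only [roots_X_sub_C, Multiset.bind_singleton] at h
  apply Multiset.map_injective (RCLike.ofReal_injective (K := 𝕜))
  simpa only [Multiset.map_map, Function.comp_def] using h.symm

lemma spectrum_real_eq_range_of_charpoly_eq : spectrum ℝ A = Set.range lam := by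
  have hrange (f : n → ℝ) : Set.range f = {x | x ∈ Finset.univ.val.map f} := by ext; simp
  rw [hA.spectrum_real_eq_range_eigenvalues, hrange, hrange,
    hA.map_eigenvalues_eq_of_charpoly_eq hchar]

lemma trace_cfc_eq_sum_of_charpoly_eq (f : ℝ → ℝ) :
    (cfc f A).trace = ∑ i, (f (lam i) : 𝕜) := by
  calc (cfc f A).trace = ((Finset.univ.val.map hA.eigenvalues).map fun x => (f x : 𝕜)).sum := by
        rw [hA.trace_cfc_eq, Multiset.map_map]; rfl
    _ = ∑ i, (f (lam i) : 𝕜) := by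
        rw [hA.map_eigenvalues_eq_of_charpoly_eq hchar, Multiset.map_map]; rfl

end IsHermitian

end Matrix

theorem stmt8_general {n : ℕ} (Q : Matrix (Fin (n + 1)) (Fin (n + 1)) ℝ) (hQ : Q.IsSymm)
    (lam : Fin (n + 1) → ℝ)
    (hchar : Matrix.charpoly Q = ∏ i, (X - C (lam i)))
    (h1 : lam 0 < 1)
    (h2 : ∀ i, i ≠ 0 → 0 ≤ lam i ∧ lam i ≤ 1 / 2)
    (ℓ : ℕ) :
    ∑ i, ∑ j, ((Q * ((1 - Q)⁻¹) ^ ℓ) i j) ^ 2 ≤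
      ((1 - lam 0) ^ (2 * ℓ))⁻¹ + 4 ^ ℓ * Matrix.trace (Q * Q) := by
  have hH : Q.IsHermitian := hQ
  have hspec : ∀ x ∈ spectrum ℝ Q, x ≠ 1 := by
    rw [hH.spectrum_real_eq_range_of_charpoly_eq hchar]
    rintro - ⟨i, rfl⟩
    rcases eq_or_ne i 0 with rfl | hi
    · exact h1.ne
    · exact ((h2 i hi).2.trans_lt (by norm_num)).ne
  set g : ℝ → ℝ := fun x => x * (1 - x)⁻¹ ^ ℓ
  have hM : Q * ((1 - Q)⁻¹) ^ ℓ = cfc g Q := by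
    rw [Matrix.nonsing_inv_eq_ringInverse, cfc_mul_inv_one_sub_pow hH.isSelfAdjoint hspec]
  have hMsymm : (cfc g Q).IsSymm :=
    Matrix.isHermitian_iff_isSymm.mp (cfc_predicate (R := ℝ) g Q).isHermitian
  have hlhs : ∑ i, ∑ j, ((Q * ((1 - Q)⁻¹) ^ ℓ) i j) ^ 2 = ∑ i, g (lam i) ^ 2 := by
    rw [hM, hMsymm.sum_sq_entries_eq_trace_mul_self, ← sq,
      ← cfc_pow g 2 Q (hf := Q.finite_real_spectrum.continuousOn g),
      hH.trace_cfc_eq_sum_of_charpoly_eq hchar]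
    rfl
  have hrhs : Matrix.trace (Q * Q) = ∑ i, lam i ^ 2 := by
    rw [← sq, ← cfc_pow_id (R := ℝ) Q 2, hH.trace_cfc_eq_sum_of_charpoly_eq hchar]
    rfl
  have hsucc : ∀ i : Fin n, g (lam i.succ) ^ 2 ≤ 4 ^ ℓ * lam i.succ ^ 2 := fun i =>
    sq_mul_inv_one_sub_pow_le_of_le_half (h2 _ i.succ_ne_zero).2 ℓ
  rw [hlhs, hrhs, Fin.sum_univ_succ, Fin.sum_univ_succ, mul_add, Finset.mul_sum]
  linarith [sq_mul_inv_one_sub_pow_le h1 ℓ,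
    Finset.sum_le_sum fun i (_ : i ∈ Finset.univ) => hsucc i]

/-- If `Q` is real symmetric with eigenvalues (in descending order) `λ₀ < 1` and
`λ_i ∈ [0, 1/2]` for `i ≥ 1`, then `‖Q(I-Q)^{-ℓ}‖_F² ≤ (1-λ₀)^{-2ℓ} + 4^ℓ Tr(Q²)`. -/
theorem stmt8 {n : ℕ} (Q : Matrix (Fin (n + 1)) (Fin (n + 1)) ℝ) (hQ : Q.IsSymm)
    (lam : Fin (n + 1) → ℝ)
    (hchar : Matrix.charpoly Q = ∏ i, (X - C (lam i)))
    (hmono : Antitone lam)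
    (h1 : lam 0 < 1)
    (h2 : ∀ i, i ≠ 0 → 0 ≤ lam i ∧ lam i ≤ 1 / 2)
    (ℓ : ℕ) (hℓ : 1 ≤ ℓ) :
    ∑ i, ∑ j, ((Q * ((1 - Q)⁻¹) ^ ℓ) i j) ^ 2 ≤
      ((1 - lam 0) ^ (2 * ℓ))⁻¹ + 4 ^ ℓ * Matrix.trace (Q * Q) :=
  stmt8_general Q hQ lam hchar h1 h2 ℓ
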